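/- arXiv:2408.04108 — 5 statements merged into one kernel-verified Lean document; each statement's English description precedes it below -/
import Mathlib

section
/- Let σ, φ > 0 with σφ < 1. Define I₀(t) = φ(1-σφ)e^{-(1-σφ)t} / (1 - σφ e^{-(1-σφ)t}) for t ≥ 0. Then I₀ satisfies the ODE I₀'(t) = -I₀(t)·(σ(I₀(t) - φ) + 1) on [0,∞) with I₀(0) = φ. -/
theorem regionI_iodine_ODE (σ φ : ℝ) (hσ : 0 < σ) (hφ : 0 < φ) (hσφ : σ * φ < 1)
    (I₀ : ℝ → ℝ)
    (hI₀ : ∀ t, I₀ t = φ * (1 - σ * φ) * Real.exp (-(1 - σ * φ) * t) /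
      (1 - σ * φ * Real.exp (-(1 - σ * φ) * t))) :
    (∀ t ≥ (0:ℝ), HasDerivAt I₀ (-(I₀ t) * (σ * (I₀ t - φ) + 1)) t) ∧ I₀ 0 = φ := by
  have hfun : I₀ = fun t => φ * (1 - σ * φ) * Real.exp (-(1 - σ * φ) * t) /
      (1 - σ * φ * Real.exp (-(1 - σ * φ) * t)) := funext hI₀
  constructor
  · intro t ht
    have hk : 0 < 1 - σ * φ := by linarith
    have hEpos : 0 < Real.exp (-(1 - σ * φ) * t) := Real.exp_pos _
    have hE1 : Real.exp (-(1 - σ * φ) * t) ≤ 1 := by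
      apply Real.exp_le_one_iff.mpr
      nlinarith
    have hσφpos : 0 < σ * φ := mul_pos hσ hφ
    have hD : 0 < 1 - σ * φ * Real.exp (-(1 - σ * φ) * t) := by nlinarith
    have hDne : 1 - σ * φ * Real.exp (-(1 - σ * φ) * t) ≠ 0 := ne_of_gt hD
    have hEd : HasDerivAt (fun x => Real.exp (-(1 - σ * φ) * x))
        (Real.exp (-(1 - σ * φ) * t) * (-(1 - σ * φ))) t := by
      have := ((hasDerivAt_id t).const_mul (-(1 - σ * φ))).exp
      simpa using this
    have hN : HasDerivAt (fun x => φ * (1 - σ * φ) * Real.exp (-(1 - σ * φ) * x))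
        (φ * (1 - σ * φ) * (Real.exp (-(1 - σ * φ) * t) * (-(1 - σ * φ)))) t :=
      hEd.const_mul _
    have hDd : HasDerivAt (fun x => 1 - σ * φ * Real.exp (-(1 - σ * φ) * x))
        (-(σ * φ * (Real.exp (-(1 - σ * φ) * t) * (-(1 - σ * φ))))) t :=
      (hEd.const_mul (σ * φ)).const_sub 1
    have hdiv := hN.div hDd hDne
    simp only [hfun]
    set E := Real.exp (-(1 - σ * φ) * t) with hE
    clear_value E
    refine hdiv.congr_deriv ?_
    have hDne' : 1 - φ * σ * E ≠ 0 := by rwa [mul_comm φ σ]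
    field_simp
    ring
  · rw [hI₀ 0, show (-(1 - σ * φ) * (0:ℝ)) = 0 by ring, Real.exp_zero]
    have h1 : 1 - φ * σ ≠ 0 := by intro h; nlinarith
    field_simp
end

section
/- Let σ, ρ, φ > 0 with σφ < 1 and ρ + σφ - 1 > 0. Define P₀(T) = e^{-σT}, Q̃₀(T) = (ρ/(γσ))e^{-σT}, C₀(T) = ρe^{-σT} + (1 - σφ - ρ), Ĩ₀(T) = ρe^{-σT}/(ρe^{-σT} + 1 - σφ - ρ). Then on the interval [0, T_sw) where T_sw = (1/σ)ln(ρ/(ρ + σφ - 1)), these functions satisfy P₀' = -σP₀, 0 = ρP₀ - γσQ̃₀, C₀' = -σĨ₀C₀, and 0 = γσQ̃₀ - Ĩ₀C₀. -/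
theorem regionII_MHP_solution (σ ρ φ γ : ℝ) (hσ : 0 < σ) (hρ : 0 < ρ) (hφ : 0 < φ)
    (hγ : 0 < γ) (hσφ : σ * φ < 1) (hρσφ : 0 < ρ + σ * φ - 1)
    (P₀ Q₀ C₀ I₀ : ℝ → ℝ)
    (hP₀ : ∀ T, P₀ T = Real.exp (-σ * T))
    (hQ₀ : ∀ T, Q₀ T = (ρ / (γ * σ)) * Real.exp (-σ * T))
    (hC₀ : ∀ T, C₀ T = ρ * Real.exp (-σ * T) + (1 - σ * φ - ρ))
    (hI₀ : ∀ T, I₀ T = ρ * Real.exp (-σ * T) / (ρ * Real.exp (-σ * T) + 1 - σ * φ - ρ))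
    (Tsw : ℝ) (hTsw : Tsw = (1 / σ) * Real.log (ρ / (ρ + σ * φ - 1))) :
    ∀ T ∈ Set.Ico (0:ℝ) Tsw,
      HasDerivAt P₀ (-σ * P₀ T) T ∧
      0 = ρ * P₀ T - γ * σ * Q₀ T ∧
      HasDerivAt C₀ (-σ * I₀ T * C₀ T) T ∧
      0 = γ * σ * Q₀ T - I₀ T * C₀ T := by
  intro T hT
  obtain ⟨hT0, hTlt⟩ := hT
  have hγσ : γ * σ ≠ 0 := by positivity
  -- denominator positivity
  have hratio : (0:ℝ) < ρ / (ρ + σ * φ - 1) := by positivity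
  have hexp : Real.exp (-σ * T) > (ρ + σ * φ - 1) / ρ := by
    have h1 : σ * T < Real.log (ρ / (ρ + σ * φ - 1)) := by
      have := hTlt
      rw [hTsw] at this
      calc σ * T < σ * ((1 / σ) * Real.log (ρ / (ρ + σ * φ - 1))) := by
            exact (mul_lt_mul_iff_right₀ hσ).mpr this
        _ = Real.log (ρ / (ρ + σ * φ - 1)) := by field_simp
    have h2 : -Real.log (ρ / (ρ + σ * φ - 1)) < -σ * T := by linarith
    have h3 : -Real.log (ρ / (ρ + σ * φ - 1)) = Real.log ((ρ + σ * φ - 1) / ρ) := by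
      rw [← Real.log_inv]
      congr 1
      field_simp
    have h4 : Real.log ((ρ + σ * φ - 1) / ρ) < -σ * T := by rw [← h3]; exact h2
    calc (ρ + σ * φ - 1) / ρ = Real.exp (Real.log ((ρ + σ * φ - 1) / ρ)) := by
          rw [Real.exp_log (by positivity)]
      _ < Real.exp (-σ * T) := Real.exp_lt_exp.mpr h4
  have hD : 0 < ρ * Real.exp (-σ * T) + 1 - σ * φ - ρ := by
    have h := (div_lt_iff₀ hρ).mp hexp
    nlinarith [Real.exp_pos (-σ * T)]
  have hDne : ρ * Real.exp (-σ * T) + 1 - σ * φ - ρ ≠ 0 := ne_of_gt hD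
  have hIC : I₀ T * C₀ T = ρ * Real.exp (-σ * T) := by
    rw [hI₀, hC₀]
    have : ρ * Real.exp (-σ * T) + (1 - σ * φ - ρ) = ρ * Real.exp (-σ * T) + 1 - σ * φ - ρ := by ring
    rw [this, div_mul_cancel₀ _ hDne]
  refine ⟨?_, ?_, ?_, ?_⟩
  · have h : HasDerivAt (fun T => Real.exp (-σ * T)) (Real.exp (-σ * T) * (-σ * 1)) T :=
      ((hasDerivAt_id T).const_mul (-σ)).exp
    have heq : (fun T => Real.exp (-σ * T)) = P₀ := by ext x; rw [hP₀]
    rw [heq] at h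
    rw [hP₀]
    convert h using 1; ring
  · rw [hP₀, hQ₀]; field_simp; ring
  · have h : HasDerivAt (fun T => ρ * Real.exp (-σ * T) + (1 - σ * φ - ρ))
        (ρ * (Real.exp (-σ * T) * (-σ))) T := by
      have h1 := (((hasDerivAt_id T).const_mul (-σ)).exp).const_mul ρ
      have h2 := h1.add_const (1 - σ * φ - ρ)
      exact h2.congr_deriv (by simp only [id_eq]; ring)
    have heq : (fun T => ρ * Real.exp (-σ * T) + (1 - σ * φ - ρ)) = C₀ := by
      ext x; rw [hC₀]
    rw [heq] at h
    convert h using 1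
    rw [show -σ * I₀ T * C₀ T = -σ * (I₀ T * C₀ T) by ring, hIC]; ring
  · rw [hQ₀, hIC]; field_simp; ring
end

section
/- Let ρ̄ > 0 and define C̄₀(t) = ρ̄√2·exp(-ρ̄²t²/2) / (√π·(erf(ρ̄t/√2) + 1)) for all real t. Then C̄₀ satisfies the Riccati equation C̄₀'(t) = -(ρ̄²t + C̄₀(t))·C̄₀(t) on ℝ, and C̄₀(t) > 0 for all t. -/
open MeasureTheory Real intervalIntegral

noncomputable def erf (x : ℝ) : ℝ :=
  (2 / Real.sqrt Real.pi) * ∫ s in (0:ℝ)..x, Real.exp (-s ^ 2)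

lemma gauss_integrable : Integrable (fun s : ℝ => Real.exp (-s ^ 2)) := by
  simpa using integrable_exp_neg_mul_sq (one_pos)

lemma gauss_cont : Continuous (fun s : ℝ => Real.exp (-s ^ 2)) := by
  continuity

lemma erf_hasDerivAt (x : ℝ) :
    HasDerivAt erf (2 / Real.sqrt Real.pi * Real.exp (-x ^ 2)) x := by
  have h : HasDerivAt (fun u => ∫ s in (0:ℝ)..u, Real.exp (-s ^ 2))
      (Real.exp (-x ^ 2)) x :=
    intervalIntegral.integral_hasDerivAt_right
      (gauss_integrable.intervalIntegrable)
      (gauss_cont.aestronglyMeasurable.stronglyMeasurableAtFilter)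
      gauss_cont.continuousAt
  exact h.const_mul _

lemma integral_Iic_gauss : ∫ s in Set.Iic (0:ℝ), Real.exp (-s ^ 2) = Real.sqrt Real.pi / 2 := by
  have h1 : (∫ s in Set.Iic (0:ℝ), Real.exp (-s ^ 2)) + ∫ s in Set.Ioi (0:ℝ), Real.exp (-s ^ 2)
      = ∫ s : ℝ, Real.exp (-s ^ 2) :=
    integral_Iic_add_Ioi gauss_integrable.integrableOn gauss_integrable.integrableOn
  have h2 : ∫ s in Set.Ioi (0:ℝ), Real.exp (-s ^ 2) = Real.sqrt Real.pi / 2 := by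
    simpa using integral_gaussian_Ioi 1
  have h3 : ∫ s : ℝ, Real.exp (-s ^ 2) = Real.sqrt Real.pi := by
    simpa using integral_gaussian 1
  linarith

lemma erf_add_one_pos (x : ℝ) : 0 < erf x + 1 := by
  have hπ : 0 < Real.sqrt Real.pi := Real.sqrt_pos.mpr Real.pi_pos
  have key : -(Real.sqrt Real.pi / 2) < ∫ s in (0:ℝ)..x, Real.exp (-s ^ 2) := by
    rcases le_or_gt 0 x with hx | hx
    · have : 0 ≤ ∫ s in (0:ℝ)..x, Real.exp (-s ^ 2) :=
        intervalIntegral.integral_nonneg hx (fun s _ => (Real.exp_pos _).le)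
      linarith
    · rw [intervalIntegral.integral_symm, intervalIntegral.integral_of_le hx.le]
      have hsplit : (∫ s in Set.Iic x, Real.exp (-s ^ 2))
            + ∫ s in Set.Ioc x 0, Real.exp (-s ^ 2)
          = ∫ s in Set.Iic (0:ℝ), Real.exp (-s ^ 2) := by
        rw [← MeasureTheory.setIntegral_union]
        · rw [Set.Iic_union_Ioc_eq_Iic hx.le]
        · exact Set.Iic_disjoint_Ioc le_rfl
        · exact measurableSet_Ioc
        · exact gauss_integrable.integrableOn
        · exact gauss_integrable.integrableOn
      have hpos : 0 < ∫ s in Set.Iic x, Real.exp (-s ^ 2) := by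
        apply MeasureTheory.setIntegral_pos_iff_support_of_nonneg_ae ?_ gauss_integrable.integrableOn |>.mpr
        · have : (Function.support fun s : ℝ => Real.exp (-s ^ 2)) = Set.univ := by
            ext s; simp [Function.support, (Real.exp_pos _).ne']
          rw [this, Set.univ_inter]
          simp [Real.volume_Iic]
        · exact Filter.Eventually.of_forall fun s => (Real.exp_pos _).le
      rw [integral_Iic_gauss] at hsplit
      linarith
  have : -1 < erf x := by
    unfold erf
    rw [show (-1 : ℝ) = (2 / Real.sqrt Real.pi) * (-(Real.sqrt Real.pi / 2)) by
      field_simp]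
    exact (mul_lt_mul_iff_right₀ (by positivity)).mpr key
  linarith

theorem corner_Riccati_MHP (ρ : ℝ) (hρ : 0 < ρ)
    (C : ℝ → ℝ)
    (hC : ∀ t, C t = ρ * Real.sqrt 2 * Real.exp (-ρ ^ 2 * t ^ 2 / 2) /
      (Real.sqrt Real.pi * (erf (ρ * t / Real.sqrt 2) + 1))) :
    (∀ t, HasDerivAt C (-(ρ ^ 2 * t + C t) * C t) t) ∧ (∀ t, 0 < C t) := by
  have h2 : (0:ℝ) < Real.sqrt 2 := Real.sqrt_pos.mpr (by norm_num)
  have hπ : 0 < Real.sqrt Real.pi := Real.sqrt_pos.mpr Real.pi_pos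
  set N : ℝ → ℝ := fun t => ρ * Real.sqrt 2 * Real.exp (-ρ ^ 2 * t ^ 2 / 2) with hNdef
  set g : ℝ → ℝ := fun t => Real.sqrt Real.pi * (erf (ρ * t / Real.sqrt 2) + 1) with hgdef
  have hNpos : ∀ t, 0 < N t := fun t => by positivity
  have hgpos : ∀ t, 0 < g t := fun t => by
    have := erf_add_one_pos (ρ * t / Real.sqrt 2); positivity
  have hCeq : C = fun t => N t / g t := funext hC
  have hpos : ∀ t, 0 < C t := fun t => by
    rw [hCeq]; exact div_pos (hNpos t) (hgpos t)
  refine ⟨fun t => ?_, hpos⟩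
  -- derivative of N
  have hNderiv : HasDerivAt N (-(ρ ^ 2 * t) * N t) t := by
    have hinner : HasDerivAt (fun t : ℝ => -ρ ^ 2 * t ^ 2 / 2) (-(ρ ^ 2 * t)) t := by
      have := ((hasDerivAt_pow 2 t).const_mul (-ρ ^ 2)).div_const 2
      simpa using this.congr_deriv (by ring)
    have := ((hinner.exp).const_mul (ρ * Real.sqrt 2))
    simpa [hNdef, mul_comm, mul_left_comm, mul_assoc] using this
  -- derivative of g
  have hgderiv : HasDerivAt g (N t) t := by
    have hu : HasDerivAt (fun t : ℝ => ρ * t / Real.sqrt 2) (ρ / Real.sqrt 2) t := by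
      simpa [mul_div_assoc] using ((hasDerivAt_id t).const_mul ρ).div_const (Real.sqrt 2)
    have herf := (erf_hasDerivAt (ρ * t / Real.sqrt 2)).comp t hu
    have := (herf.const_add (0:ℝ))
    have hg' := ((herf.add_const (1:ℝ)).const_mul (Real.sqrt Real.pi))
    have heq : Real.sqrt Real.pi *
        (2 / Real.sqrt Real.pi * Real.exp (-(ρ * t / Real.sqrt 2) ^ 2) * (ρ / Real.sqrt 2))
        = N t := by
      have h2sq : Real.sqrt 2 ^ 2 = 2 := Real.sq_sqrt (by norm_num)
      have harg : -(ρ * t / Real.sqrt 2) ^ 2 = -ρ ^ 2 * t ^ 2 / 2 := by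
        rw [div_pow, mul_pow, h2sq]; ring
      rw [harg]
      show Real.sqrt Real.pi * (2 / Real.sqrt Real.pi *
        Real.exp (-ρ ^ 2 * t ^ 2 / 2) * (ρ / Real.sqrt 2))
        = ρ * Real.sqrt 2 * Real.exp (-ρ ^ 2 * t ^ 2 / 2)
      generalize Real.exp (-ρ ^ 2 * t ^ 2 / 2) = a
      field_simp
      have h22 : Real.sqrt 2 * Real.sqrt 2 = 2 := Real.mul_self_sqrt (by norm_num)
      linear_combination (-a) * h22
    rw [hgdef]
    simpa [heq] using hg'
  have hdiv := hNderiv.div hgderiv (hgpos t).ne'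
  rw [hCeq]
  have hb : g t ≠ 0 := (hgpos t).ne'
  have key : -(ρ ^ 2 * t + N t / g t) * (N t / g t)
      = (-(ρ ^ 2 * t) * N t * g t - N t * N t) / g t ^ 2 := by
    generalize N t = a
    generalize hg : g t = b
    rw [hg] at hb
    field_simp
    ring
  show HasDerivAt (fun t => N t / g t) (-(ρ ^ 2 * t + N t / g t) * (N t / g t)) t
  rw [key]
  exact hdiv
end

section
/- Let ρ̄ > 0 and C̄₀(t) = ρ̄√2·exp(-ρ̄²t²/2)/(√π·(erf(ρ̄t/√2) + 1)). Then C̄₀(t) → 0 as t → +∞, and C̄₀(t) + ρ̄²t → 0 as t → -∞. -/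
open MeasureTheory Set Real Filter

noncomputable def E (s : ℝ) : ℝ := Real.exp (-s ^ 2)

lemma E_pos (s : ℝ) : 0 < E s := Real.exp_pos _

lemma intE : Integrable E := by
  show Integrable (fun s : ℝ => Real.exp (-s ^ 2))
  simpa using integrable_exp_neg_mul_sq (b := 1) one_pos

lemma intsE : Integrable (fun s => s * E s) := by
  simpa [E] using integrable_mul_exp_neg_mul_sq (b := 1) one_pos

noncomputable def K (u : ℝ) : ℝ := ∫ s in Iic u, E s

lemma K_pos (u : ℝ) : 0 < K u := by
  rw [K, setIntegral_pos_iff_support_of_nonneg_ae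
    (Eventually.of_forall fun s => (E_pos s).le) intE.integrableOn]
  have : Function.support E = univ := by
    ext s; simp [Function.support, E, Real.exp_ne_zero]
  rw [this, univ_inter, Real.volume_Iic]
  simp

lemma E_tendsto_bot : Tendsto E atBot (nhds 0) := by
  have h1 : Tendsto (fun s : ℝ => s ^ 2) atBot atTop := by
    have h := (tendsto_pow_atTop (two_ne_zero)).comp (tendsto_neg_atBot_atTop (G := ℝ))
    convert h using 2 with s
    simp [Function.comp, neg_pow]
  have h2 : Tendsto (fun s : ℝ => -s ^ 2) atBot atBot := tendsto_neg_atTop_atBot.comp h1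
  exact Real.tendsto_exp_atBot.comp h2

lemma K_zero : K 0 = Real.sqrt Real.pi / 2 := by
  have h1 := integral_comp_neg_Iic (0 : ℝ) E
  have h2 : ∀ x : ℝ, E (-x) = E x := fun x => by simp [E]
  simp_rw [h2, neg_zero] at h1
  have h3 : (∫ s in Ioi (0:ℝ), E s) = Real.sqrt Real.pi / 2 := by
    simpa [E] using integral_gaussian_Ioi 1
  rw [K, h1, h3]

lemma erf_eq (u : ℝ) : erf u + 1 = 2 / Real.sqrt Real.pi * K u := by
  have h := intervalIntegral.integral_Iic_sub_Iic (μ := volume) (f := E)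
    intE.integrableOn intE.integrableOn (a := 0) (b := u)
  have hπ : (0:ℝ) < Real.sqrt Real.pi := Real.sqrt_pos.2 Real.pi_pos
  have hiv : (∫ s in (0:ℝ)..u, Real.exp (-s ^ 2)) = K u - K 0 := by
    rw [show (∫ s in (0:ℝ)..u, Real.exp (-s ^ 2)) = ∫ s in (0:ℝ)..u, E s from rfl, ← h]; rfl
  rw [erf, hiv, K_zero]
  field_simp
  ring

lemma int_mul (u : ℝ) : (∫ s in Iic u, s * E s) = -E u / 2 := by
  have hderiv : ∀ x ∈ Iio u, HasDerivAt (fun s : ℝ => -E s / 2) (x * E x) x := by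
    intro x _
    have h : HasDerivAt (fun s : ℝ => -s ^ 2) (-(2 * x)) x := by
      simpa using (hasDerivAt_pow 2 x).fun_neg
    have h2 := (h.exp.neg).div_const 2
    refine h2.congr_deriv ?_
    simp [E]; ring
  have hcont : ContinuousWithinAt (fun s : ℝ => -E s / 2) (Iic u) u := by
    apply Continuous.continuousWithinAt
    exact ((Real.continuous_exp.comp (by continuity)).neg).div_const 2
  have htend : Tendsto (fun s : ℝ => -E s / 2) atBot (nhds 0) := by
    have := (E_tendsto_bot.neg).div_const 2
    simpa using this
  have := MeasureTheory.integral_Iic_of_hasDerivAt_of_tendsto hcont hderiv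
    intsE.integrableOn htend
  rw [this]; ring

lemma K_le (u : ℝ) (hu : u < 0) : K u ≤ E u / (-2 * u) := by
  have h1 : K u ≤ ∫ s in Iic u, (1 / u) * (s * E s) := by
    apply setIntegral_mono_on intE.integrableOn
      ((intsE.const_mul (1/u)).integrableOn) measurableSet_Iic
    intro s hs
    have hs' : s ≤ u := hs
    have h := mul_le_mul_of_nonneg_right hs' (E_pos s).le
    have h2 : (1 / u) * (u * E s) ≤ (1 / u) * (s * E s) :=
      mul_le_mul_of_nonpos_left h (by apply div_nonpos_of_nonneg_of_nonpos <;> linarith)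
    have he : E s = 1 / u * (u * E s) := by
      rw [one_div, inv_mul_cancel_left₀ hu.ne]
    linarith
  rw [MeasureTheory.integral_const_mul, int_mul] at h1
  calc K u ≤ 1 / u * (-E u / 2) := h1
    _ = E u / (-2 * u) := by field_simp

lemma contE : Continuous E := Real.continuous_exp.comp (by continuity)

noncomputable def g (s : ℝ) : ℝ := s * E s / (2 * s ^ 2 + 1)
noncomputable def g' (s : ℝ) : ℝ := E s * (2 - (2 * s ^ 2 + 1) ^ 2) / (2 * s ^ 2 + 1) ^ 2

lemma hasDerivAt_g (x : ℝ) : HasDerivAt g (g' x) x := by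
  have hden : (2 * x ^ 2 + 1) ≠ 0 := by positivity
  have hE : HasDerivAt E (E x * (-(2 * x))) x := by
    have h : HasDerivAt (fun s : ℝ => -s ^ 2) (-(2 * x)) x := by
      simpa using (hasDerivAt_pow 2 x).fun_neg
    show HasDerivAt (fun s => Real.exp (-s ^ 2)) (Real.exp (-x ^ 2) * (-(2 * x))) x
    simpa using h.exp
  have hnum : HasDerivAt (fun s : ℝ => s * E s) (1 * E x + x * (E x * (-(2 * x)))) x :=
    (hasDerivAt_id x).mul hE
  have hden' : HasDerivAt (fun s : ℝ => 2 * s ^ 2 + 1) (2 * (2 * x ^ 1)) x :=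
    ((hasDerivAt_pow 2 x).const_mul 2).add_const 1
  have := hnum.div hden' hden
  refine this.congr_deriv ?_
  rw [g']
  field_simp
  ring

lemma abs_g_le (s : ℝ) : |g s| ≤ E s := by
  have hden : (0:ℝ) < 2 * s ^ 2 + 1 := by positivity
  have h1 : |s| ≤ 2 * s ^ 2 + 1 := by nlinarith [sq_nonneg (2 * |s| - 1), sq_abs s]
  rw [g, abs_div, abs_mul, abs_of_pos (E_pos s), abs_of_pos hden, div_le_iff₀ hden]
  nlinarith [mul_le_mul_of_nonneg_right h1 (E_pos s).le]

lemma g_tendsto_bot : Tendsto g atBot (nhds 0) := by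
  have h0 : Tendsto (fun s : ℝ => -E s) atBot (nhds 0) := by
    simpa using E_tendsto_bot.neg
  exact tendsto_of_tendsto_of_tendsto_of_le_of_le h0 E_tendsto_bot
    (fun s => (abs_le.mp (abs_g_le s)).1) (fun s => (abs_le.mp (abs_g_le s)).2)

lemma abs_g'_le (s : ℝ) : |g' s| ≤ E s := by
  have hden2 : (0:ℝ) < (2 * s ^ 2 + 1) ^ 2 := by positivity
  have hw : (1:ℝ) ≤ (2 * s ^ 2 + 1) ^ 2 := by nlinarith [sq_nonneg s]
  have habs : |2 - (2 * s ^ 2 + 1) ^ 2| ≤ (2 * s ^ 2 + 1) ^ 2 :=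
    abs_le.mpr ⟨by linarith, by linarith⟩
  rw [g', abs_div, abs_mul, abs_of_pos (E_pos s), abs_of_pos hden2, div_le_iff₀ hden2]
  nlinarith [mul_le_mul_of_nonneg_left habs (E_pos s).le]

lemma contg' : Continuous g' := by
  apply Continuous.div (by exact contE.mul (by continuity)) (by continuity)
  intro x; positivity

lemma intg' : Integrable g' := by
  apply intE.mono contg'.aestronglyMeasurable
  filter_upwards with s
  rw [Real.norm_eq_abs, Real.norm_eq_abs, abs_of_pos (E_pos s)]
  exact abs_g'_le s

lemma K_ge (u : ℝ) : -u * E u / (2 * u ^ 2 + 1) ≤ K u := by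
  have hint := MeasureTheory.integral_Iic_of_hasDerivAt_of_tendsto
    ((hasDerivAt_g u).continuousAt.continuousWithinAt)
    (fun x _ => hasDerivAt_g x) intg'.integrableOn g_tendsto_bot
  have hmono : (∫ s in Iic u, -E s) ≤ ∫ s in Iic u, g' s := by
    apply setIntegral_mono_on intE.neg.integrableOn intg'.integrableOn measurableSet_Iic
    exact fun s _ => (abs_le.mp (abs_g'_le s)).1
  rw [hint, MeasureTheory.integral_neg, sub_zero] at hmono
  have : -K u ≤ g u := hmono
  rw [g] at this
  rw [show -u * E u / (2 * u ^ 2 + 1) = -(u * E u / (2 * u ^ 2 + 1)) from by ring]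
  linarith

lemma K_ge_half (u : ℝ) (hu : 0 ≤ u) : Real.sqrt Real.pi / 2 ≤ K u := by
  have h := intervalIntegral.integral_Iic_sub_Iic (μ := volume) (f := E)
    intE.integrableOn intE.integrableOn (a := 0) (b := u)
  have hnn : 0 ≤ ∫ s in (0:ℝ)..u, E s :=
    intervalIntegral.integral_nonneg hu fun s _ => (E_pos s).le
  have hK0 : K 0 = Real.sqrt Real.pi / 2 := K_zero
  have : K u - K 0 = ∫ s in (0:ℝ)..u, E s := h
  linarith

lemma mills_lower (u : ℝ) (hu : u < 0) : 0 ≤ E u / (2 * K u) + u := by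
  have hKpos := K_pos u
  have hEpos := E_pos u
  have hA := K_le u hu
  have hA' : K u * (-2 * u) ≤ E u := by
    rwa [le_div_iff₀ (by linarith : (0:ℝ) < -2 * u)] at hA
  have hquot : -u ≤ E u / (2 * K u) := by
    rw [le_div_iff₀ (by positivity)]
    nlinarith
  linarith

lemma mills_upper (u : ℝ) (hu : u < 0) : E u / (2 * K u) + u ≤ 1 / (-2 * u) := by
  have hKpos := K_pos u
  have hEpos := E_pos u
  have hB := K_ge u
  have hB' : -u * E u ≤ K u * (2 * u ^ 2 + 1) := by
    rwa [div_le_iff₀ (by positivity : (0:ℝ) < 2 * u ^ 2 + 1)] at hB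
  have hquot : E u / (2 * K u) ≤ (2 * u ^ 2 + 1) / (-2 * u) := by
    rw [div_le_div_iff₀ (by positivity) (by linarith : (0:ℝ) < -2 * u)]
    nlinarith
  have heq : (2 * u ^ 2 + 1) / (-2 * u) + u = 1 / (-2 * u) := by
    field_simp [hu.ne]
    ring
  linarith

theorem corner_limits_MHP (ρ : ℝ) (hρ : 0 < ρ)
    (C : ℝ → ℝ)
    (hC : ∀ t, C t = ρ * Real.sqrt 2 * Real.exp (-ρ ^ 2 * t ^ 2 / 2) /
      (Real.sqrt Real.pi * (erf (ρ * t / Real.sqrt 2) + 1))) :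
    Filter.Tendsto C Filter.atTop (nhds 0) ∧
    Filter.Tendsto (fun t => C t + ρ ^ 2 * t) Filter.atBot (nhds 0) := by
  have hπ : (0:ℝ) < Real.sqrt Real.pi := Real.sqrt_pos.2 Real.pi_pos
  have h2 : (0:ℝ) < Real.sqrt 2 := Real.sqrt_pos.2 (by norm_num)
  have hs2 : Real.sqrt 2 ^ 2 = 2 := Real.sq_sqrt (by norm_num)
  have hexp : ∀ t, Real.exp (-ρ ^ 2 * t ^ 2 / 2) = E (ρ * t / Real.sqrt 2) := by
    intro t
    rw [E]
    congr 1
    rw [div_pow, hs2]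
    ring
  have hCK : ∀ t, C t = ρ * Real.sqrt 2 * E (ρ * t / Real.sqrt 2) /
      (2 * K (ρ * t / Real.sqrt 2)) := by
    intro t
    rw [hC t, erf_eq, hexp]
    congr 1
    field_simp
  have hexp_top : Tendsto (fun t : ℝ => Real.exp (-ρ ^ 2 * t ^ 2 / 2)) atTop (nhds 0) := by
    apply Real.tendsto_exp_atBot.comp
    have h1 : Tendsto (fun t : ℝ => -(ρ ^ 2) / 2 * t ^ 2) atTop atBot :=
      (tendsto_pow_atTop two_ne_zero).const_mul_atTop_of_neg (by nlinarith [sq_nonneg ρ, hρ])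
    apply h1.congr
    intro t; ring
  constructor
  · -- atTop
    have hub : Tendsto (fun t : ℝ => ρ * Real.sqrt 2 * Real.exp (-ρ ^ 2 * t ^ 2 / 2) /
        Real.sqrt Real.pi) atTop (nhds 0) := by
      have := (hexp_top.const_mul (ρ * Real.sqrt 2)).div_const (Real.sqrt Real.pi)
      simpa using this
    apply tendsto_of_tendsto_of_tendsto_of_le_of_le' tendsto_const_nhds hub
    · filter_upwards with t
      rw [hCK t]
      have hE := E_pos (ρ * t / Real.sqrt 2)
      have hK := K_pos (ρ * t / Real.sqrt 2)
      exact le_of_lt (div_pos (by positivity) (by linarith))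
    · filter_upwards [eventually_ge_atTop (0:ℝ)] with t ht
      rw [hCK t, hexp t]
      have hu0 : 0 ≤ ρ * t / Real.sqrt 2 := div_nonneg (mul_nonneg hρ.le ht) h2.le
      have hKh := K_ge_half _ hu0
      have hE := E_pos (ρ * t / Real.sqrt 2)
      exact div_le_div_of_nonneg_left (by positivity) hπ (by linarith)
  · -- atBot
    have hub : Tendsto (fun t : ℝ => -(1 : ℝ) / t) atBot (nhds 0) := by
      have h := tendsto_inv_atTop_zero.comp (tendsto_neg_atBot_atTop (G := ℝ))
      apply h.congr
      intro t
      simp [Function.comp, neg_div, inv_neg]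
    apply tendsto_of_tendsto_of_tendsto_of_le_of_le' tendsto_const_nhds hub
    · filter_upwards [eventually_lt_atBot (0:ℝ)] with t ht
      rw [hCK t]
      have hult : ρ * t / Real.sqrt 2 < 0 :=
        div_neg_of_neg_of_pos (by nlinarith) h2
      have hml := mills_lower _ hult
      have hrt : ρ ^ 2 * t = ρ * Real.sqrt 2 * (ρ * t / Real.sqrt 2) := by
        field_simp
      rw [hrt]
      have hsplit : ρ * Real.sqrt 2 * E (ρ * t / Real.sqrt 2) / (2 * K (ρ * t / Real.sqrt 2))
          + ρ * Real.sqrt 2 * (ρ * t / Real.sqrt 2)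
          = ρ * Real.sqrt 2 * (E (ρ * t / Real.sqrt 2) / (2 * K (ρ * t / Real.sqrt 2))
            + ρ * t / Real.sqrt 2) := by ring
      rw [hsplit]
      exact mul_nonneg (by positivity) hml
    · filter_upwards [eventually_lt_atBot (0:ℝ)] with t ht
      rw [hCK t]
      have hult : ρ * t / Real.sqrt 2 < 0 :=
        div_neg_of_neg_of_pos (by nlinarith) h2
      have hmu := mills_upper _ hult
      have hrt : ρ ^ 2 * t = ρ * Real.sqrt 2 * (ρ * t / Real.sqrt 2) := by
        field_simp
      have hfin : ρ * Real.sqrt 2 * (1 / (-2 * (ρ * t / Real.sqrt 2))) = -1 / t := by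
        field_simp [ht.ne, hρ.ne', h2.ne']
        linear_combination (-1) * hs2
      rw [hrt]
      have hsplit : ρ * Real.sqrt 2 * E (ρ * t / Real.sqrt 2) / (2 * K (ρ * t / Real.sqrt 2))
          + ρ * Real.sqrt 2 * (ρ * t / Real.sqrt 2)
          = ρ * Real.sqrt 2 * (E (ρ * t / Real.sqrt 2) / (2 * K (ρ * t / Real.sqrt 2))
            + ρ * t / Real.sqrt 2) := by ring
      rw [hsplit, ← hfin]
      exact mul_le_mul_of_nonneg_left hmu (by positivity)
end

section
/- Let ρ̂, γ, σ, β > 0, a = ρ̂ + γσ + βρ̂, b = √(a² - 4γσρ̂)/2. Define Q₀(τ) = -(b/(γσ))·(2b·tanh(bτ) + a)/(2b + a·tanh(bτ)) + a/(2γσ). Then Q₀ satisfies Q₀'(τ) = ρ̂(1 - Q₀(τ)) - γσ(1 - Q₀(τ))Q₀(τ) - βρ̂Q₀(τ) with Q₀(0) = 0, on any interval where 2b + a·tanh(bτ) ≠ 0. -/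
lemma my_hasDerivAt_tanh (x : ℝ) :
    HasDerivAt Real.tanh (1 - Real.tanh x ^ 2) x := by
  have hc : Real.cosh x ≠ 0 := (Real.cosh_pos x).ne'
  have h := (Real.hasDerivAt_sinh x).div (Real.hasDerivAt_cosh x) hc
  have hfun : (Real.sinh / Real.cosh) = Real.tanh := by
    funext y; rw [Pi.div_apply, Real.tanh_eq_sinh_div_cosh]
  rw [hfun] at h
  refine h.congr_deriv ?_
  rw [Real.tanh_eq_sinh_div_cosh]
  have h1 : Real.cosh x ^ 2 - Real.sinh x ^ 2 = 1 := Real.cosh_sq_sub_sinh_sq x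
  field_simp

theorem HHP_regionII_Q_ODE (ρ γ σ β : ℝ) (hρ : 0 < ρ) (hγ : 0 < γ)
    (hσ : 0 < σ) (hβ : 0 < β)
    (a : ℝ) (ha : a = ρ + γ * σ + β * ρ)
    (b : ℝ) (hb : b = Real.sqrt (a ^ 2 - 4 * γ * σ * ρ) / 2)
    (Q₀ : ℝ → ℝ)
    (hQ₀ : ∀ τ, Q₀ τ = -(b / (γ * σ)) * (2 * b * Real.tanh (b * τ) + a) /
      (2 * b + a * Real.tanh (b * τ)) + a / (2 * γ * σ)) :
    Q₀ 0 = 0 ∧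
    ∀ τ, 2 * b + a * Real.tanh (b * τ) ≠ 0 →
      HasDerivAt Q₀ (ρ * (1 - Q₀ τ) - γ * σ * (1 - Q₀ τ) * Q₀ τ - β * ρ * Q₀ τ) τ := by
  have hγσ : γ * σ > 0 := mul_pos hγ hσ
  have hdisc : a ^ 2 - 4 * γ * σ * ρ > 0 := by
    subst ha
    nlinarith [sq_nonneg (ρ - γ * σ), mul_pos (mul_pos hβ hρ) (add_pos hρ hγσ),
      sq_nonneg (β * ρ), mul_pos hβ hρ]
  have hb2 : 4 * b ^ 2 = a ^ 2 - 4 * γ * σ * ρ := by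
    rw [hb]
    rw [div_pow, Real.sq_sqrt hdisc.le]
    ring
  have hbpos : 0 < b := by
    rw [hb]; positivity
  constructor
  · rw [hQ₀ 0]
    simp [Real.tanh_zero]
    field_simp
    ring
  · intro τ hD
    have hfun : Q₀ = fun τ => -(b / (γ * σ)) * (2 * b * Real.tanh (b * τ) + a) /
      (2 * b + a * Real.tanh (b * τ)) + a / (2 * γ * σ) := funext hQ₀
    set t := Real.tanh (b * τ) with ht
    -- derivative of tanh (b τ)
    have htanh : HasDerivAt (fun τ => Real.tanh (b * τ)) (b * (1 - t ^ 2)) τ := by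
      have := (my_hasDerivAt_tanh (b * τ)).comp τ ((hasDerivAt_id τ).const_mul b)
      simpa [mul_comm, Function.comp_def] using this
    have hnum : HasDerivAt (fun τ => -(b / (γ * σ)) * (2 * b * Real.tanh (b * τ) + a))
        (-(b / (γ * σ)) * (2 * b * (b * (1 - t ^ 2)))) τ :=
      (((htanh.const_mul (2 * b)).add_const a).const_mul _)
    have hden : HasDerivAt (fun τ => 2 * b + a * Real.tanh (b * τ))
        (a * (b * (1 - t ^ 2))) τ := by
      simpa using (htanh.const_mul a).const_add (2 * b)
    have hdiv := (hnum.div hden hD).add_const (a / (2 * γ * σ))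
    have hγσ' : γ * σ ≠ 0 := hγσ.ne'
    have hD3 : b * 2 + t * a ≠ 0 := by rw [mul_comm b, mul_comm t]; exact hD
    have hD2 : 2 * b + t * a ≠ 0 := by rw [mul_comm t]; exact hD
    have hQval : Q₀ τ = 2 * ρ * t / (2 * b + a * t) := by
      rw [hQ₀ τ, ← ht]
      field_simp
      linear_combination (-t) * hb2
    have hE1 : ρ * (1 - Q₀ τ) - γ * σ * (1 - Q₀ τ) * Q₀ τ - β * ρ * Q₀ τ
        = 4 * b ^ 2 * ρ * (1 - t ^ 2) / (2 * b + a * t) ^ 2 := by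
      rw [hQval]
      field_simp
      linear_combination t ^ 2 * hb2 + 2 * t * (2 * b + t * a) * ha
    have hE2 : (-(b / (γ * σ)) * (2 * b * (b * (1 - t ^ 2))) * (2 * b + a * t) -
          -(b / (γ * σ)) * (2 * b * t + a) * (a * (b * (1 - t ^ 2)))) /
        (2 * b + a * t) ^ 2 = 4 * b ^ 2 * ρ * (1 - t ^ 2) / (2 * b + a * t) ^ 2 := by
      field_simp
      linear_combination (t ^ 2 - 1) * hb2
    have hval : ρ * (1 - Q₀ τ) - γ * σ * (1 - Q₀ τ) * Q₀ τ - β * ρ * Q₀ τ =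
        (-(b / (γ * σ)) * (2 * b * (b * (1 - t ^ 2))) * (2 * b + a * t) -
          -(b / (γ * σ)) * (2 * b * t + a) * (a * (b * (1 - t ^ 2)))) /
        (2 * b + a * t) ^ 2 := by
      rw [hE1, hE2]
    rw [hval, hfun]
    exact hdiv
end
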